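/- Let γ > 0, c ∈ ℝ, b₁ ≠ 0, b₂ ∈ ℝ and write G(u) = G(u; γ, c). Then the function f(u) = b₁·(u − c)·G(u)·(1 − G(u)) + b₂·G(u)·(1 − G(u)) is not monotone on ℝ (i.e., it is neither monotonically nondecreasing nor monotonically nonincreasing on ℝ). -/

import Mathlib

/-!
Writing `f u = (b₁ (u - c) + b₂) · G(u) (1 - G(u))` and `G (1 - G) = e / (1 + e)²` with
`e = exp (-γ (u - c))`, one gets `G (1 - G) ≤ exp (-γ |u - c|)`, so `f` tends to `0` at both
`-∞` and `+∞`. A monotone or antitone function with the same limit at both ends is constant,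
but `f` does not vanish where the affine factor equals `1`, i.e. at `u = c + (1 - b₂) / b₁`.
-/

/-- The logistic transition function `G(u; γ, c) = (1 + exp(−γ(u − c)))⁻¹`. -/
noncomputable def G (γ c u : ℝ) : ℝ := (1 + Real.exp (-γ * (u - c)))⁻¹

open Real Filter Topology

theorem Monotone.eq_of_tendsto_atBot_atTop {α β : Type*} [TopologicalSpace α] [PartialOrder α]
    [OrderClosedTopology α] [Preorder β] [IsDirectedOrder β] [IsCodirectedOrder β]
    {f : β → α} {a : α} (hf : Monotone f) (hbot : Tendsto f atBot (𝓝 a))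
    (htop : Tendsto f atTop (𝓝 a)) (b : β) : f b = a :=
  le_antisymm (hf.ge_of_tendsto htop b) (hf.le_of_tendsto hbot b)

theorem Antitone.eq_of_tendsto_atBot_atTop {α β : Type*} [TopologicalSpace α] [PartialOrder α]
    [OrderClosedTopology α] [Preorder β] [IsDirectedOrder β] [IsCodirectedOrder β]
    {f : β → α} {a : α} (hf : Antitone f) (hbot : Tendsto f atBot (𝓝 a))
    (htop : Tendsto f atTop (𝓝 a)) (b : β) : f b = a :=
  le_antisymm (hf.ge_of_tendsto hbot b) (hf.le_of_tendsto htop b)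

theorem tendsto_affine_mul_exp_neg_mul_atTop (A B : ℝ) {γ : ℝ} (hγ : 0 < γ) :
    Tendsto (fun x => (A * x + B) * exp (-γ * x)) atTop (𝓝 0) := by
  have h₁ := tendsto_rpow_mul_exp_neg_mul_atTop_nhds_zero 1 γ hγ
  have h₀ := tendsto_rpow_mul_exp_neg_mul_atTop_nhds_zero 0 γ hγ
  simpa [add_mul, mul_assoc] using (h₁.const_mul A).add (h₀.const_mul B)

theorem G_mul_one_sub_G (γ c u : ℝ) :
    G γ c u * (1 - G γ c u) = exp (-γ * (u - c)) / (1 + exp (-γ * (u - c))) ^ 2 := by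
  have : 1 + exp (-γ * (u - c)) ≠ 0 := by positivity
  rw [G]
  field_simp
  ring

theorem G_mul_one_sub_G_pos (γ c u : ℝ) : 0 < G γ c u * (1 - G γ c u) := by
  rw [G_mul_one_sub_G]
  positivity

theorem G_mul_one_sub_G_le (γ c u : ℝ) :
    G γ c u * (1 - G γ c u) ≤ exp (-γ * |u - c|) := by
  rw [G_mul_one_sub_G]
  set e := exp (-γ * (u - c)) with he
  have he₀ : 0 < e := exp_pos _
  rcases le_total c u with h | h
  · rw [abs_of_nonneg (sub_nonneg.2 h), ← he]
    exact div_le_self he₀.le (one_le_pow₀ (by linarith))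
  · rw [abs_of_nonpos (sub_nonpos.2 h), show -γ * -(u - c) = -(-γ * (u - c)) by ring, exp_neg,
      ← he, div_le_iff₀ (by positivity)]
    field_simp
    nlinarith

theorem tendsto_affine_mul_G_mul_one_sub_G_cocompact {γ : ℝ} (hγ : 0 < γ) (c A B : ℝ) :
    Tendsto (fun u => (A * (u - c) + B) * (G γ c u * (1 - G γ c u))) (cocompact ℝ) (𝓝 0) := by
  have hdist : Tendsto (fun u : ℝ => |u - c|) (cocompact ℝ) atTop :=
    tendsto_norm_cocompact_atTop.comp (Homeomorph.subRight c).isClosedEmbedding.tendsto_cocompact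
  refine squeeze_zero_norm (fun u => ?_)
    ((tendsto_affine_mul_exp_neg_mul_atTop |A| |B| hγ).comp hdist)
  rw [norm_mul, Real.norm_of_nonneg (G_mul_one_sub_G_pos γ c u).le]
  refine mul_le_mul ?_ (G_mul_one_sub_G_le γ c u) (G_mul_one_sub_G_pos γ c u).le (by positivity)
  calc ‖A * (u - c) + B‖ ≤ |A * (u - c)| + |B| := norm_add_le _ _
    _ = |A| * |u - c| + |B| := by rw [abs_mul]

/-- If `b₁ ≠ 0`, the function `f(u) = b₁·(u − c)·G(u)·(1 − G(u)) + b₂·G(u)·(1 − G(u))`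
is not monotone on `ℝ`: it is neither monotonically nondecreasing nor monotonically
nonincreasing. -/
theorem stmt12 (γ c b₁ b₂ : ℝ) (hγ : 0 < γ) (hb : b₁ ≠ 0) :
    ¬ (Monotone (fun u : ℝ =>
          b₁ * (u - c) * G γ c u * (1 - G γ c u) + b₂ * (G γ c u * (1 - G γ c u))) ∨
       Antitone (fun u : ℝ =>
          b₁ * (u - c) * G γ c u * (1 - G γ c u) + b₂ * (G γ c u * (1 - G γ c u)))) := by
  set f : ℝ → ℝ := fun u => (b₁ * (u - c) + b₂) * (G γ c u * (1 - G γ c u)) with hf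
  have hf_eq : (fun u : ℝ =>
      b₁ * (u - c) * G γ c u * (1 - G γ c u) + b₂ * (G γ c u * (1 - G γ c u))) = f := by
    funext u; ring
  have hlim : Tendsto f (cocompact ℝ) (𝓝 0) :=
    tendsto_affine_mul_G_mul_one_sub_G_cocompact hγ c b₁ b₂
  rw [cocompact_eq_atBot_atTop, tendsto_sup] at hlim
  set u₀ := c + (1 - b₂) / b₁ with hu₀
  have hfu₀ : f u₀ ≠ 0 := by
    have : b₁ * (u₀ - c) + b₂ = 1 := by rw [hu₀]; field_simp; ring
    simpa [hf, this] using (G_mul_one_sub_G_pos γ c u₀).ne'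
  rw [hf_eq]
  rintro (hmono | hanti)
  · exact hfu₀ (hmono.eq_of_tendsto_atBot_atTop hlim.1 hlim.2 u₀)
  · exact hfu₀ (hanti.eq_of_tendsto_atBot_atTop hlim.1 hlim.2 u₀)
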